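/- arXiv:1506.00997 — 4 statements merged into one kernel-verified Lean document; each statement's English description precedes it below -/
import Mathlib

section
/- Let $n \geq 1$ and let $\left[\begin{smallmatrix}n\\k\end{smallmatrix}\right] = \prod_{i=0}^{k-1} \frac{2^{n-i}-1}{2^{k-i}-1}$ denote the Gaussian (2-)binomial coefficient. Then in the polynomial ring $\mathbb{Q}[x]$ one has $\sum_{k=0}^{n} (-1)^k \left[\begin{smallmatrix}n\\k\end{smallmatrix}\right] x^k \prod_{i=1}^{n-k}(1+(2^{i-1}-1)x) = (1-x)^n$. -/
/-!
Induction on `n`. The `q`-Pascal rule `[n+1, k+1] = [n, k+1] + 2^(n-k) [n, k]` splits each summand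
for `n + 1` into a multiple of the `(k+1)`-st summand for `n` and a multiple of the `k`-th one;
after regrouping, the `k`-th summand for `n` is multiplied by
`(1 + (2^(n-k) - 1) x) - 2^(n-k) x = 1 - x`.
-/

open Finset Polynomial

/-- The Gaussian (2-)binomial coefficient `[n choose k]` at `q = 2`,
defined as `∏_{i=0}^{k-1} (2^(n-i)-1)/(2^(k-i)-1)`. -/
noncomputable def gb2 (n k : ℕ) : ℚ :=
  ∏ i ∈ Finset.range k, (((2:ℚ)^(n-i) - 1) / ((2:ℚ)^(k-i) - 1))

lemma gb2_zero_right (n : ℕ) : gb2 n 0 = 1 := by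
  simp [gb2]

lemma gb2_eq_zero_of_lt {n k : ℕ} (h : n < k) : gb2 n k = 0 :=
  prod_eq_zero (mem_range.2 h) (by simp)

lemma gb2_eq_div (n k : ℕ) :
    gb2 n k = (∏ i ∈ range k, ((2:ℚ)^(n-i) - 1)) / ∏ i ∈ range k, ((2:ℚ)^(k-i) - 1) :=
  prod_div_distrib _ _

lemma prod_two_pow_sub_sub_one_succ (m k : ℕ) :
    ∏ i ∈ range (k+1), ((2:ℚ)^(m+1-i) - 1) = (∏ i ∈ range k, ((2:ℚ)^(m-i) - 1)) * (2^(m+1) - 1) := by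
  rw [prod_range_succ']
  simp

lemma gb2_succ_right (n k : ℕ) :
    gb2 n (k+1) = gb2 n k * (((2:ℚ)^(n-k) - 1) / (2^(k+1) - 1)) := by
  rw [gb2_eq_div, gb2_eq_div, prod_range_succ, prod_two_pow_sub_sub_one_succ, div_mul_div_comm]

lemma gb2_succ_succ (n k : ℕ) :
    gb2 (n+1) (k+1) = gb2 n k * (((2:ℚ)^(n+1) - 1) / (2^(k+1) - 1)) := by
  rw [gb2_eq_div, gb2_eq_div, prod_two_pow_sub_sub_one_succ, prod_two_pow_sub_sub_one_succ,
    div_mul_div_comm]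

lemma gb2_pascal (n k : ℕ) : gb2 (n+1) (k+1) = gb2 n (k+1) + 2^(n-k) * gb2 n k := by
  rw [gb2_succ_succ, gb2_succ_right]
  rcases le_or_gt k n with hk | hk
  · have hpow : (2:ℚ)^(n+1) = 2^(n-k) * 2^(k+1) := by
      rw [← pow_add]; congr 1; omega
    have hden : (2:ℚ)^(k+1) - 1 ≠ 0 :=
      sub_ne_zero.2 (one_lt_pow₀ (by norm_num) k.succ_ne_zero).ne'
    field_simp
    rw [hpow]
    ring
  · simp [gb2_eq_zero_of_lt hk]

noncomputable def altTerm (n k : ℕ) : ℚ[X] :=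
  (-1 : ℚ[X])^k * C (gb2 n k) * X^k * ∏ i ∈ range (n-k), (1 + C ((2:ℚ)^i - 1) * X)

lemma altTerm_eq_zero_of_lt {n k : ℕ} (h : n < k) : altTerm n k = 0 := by
  simp [altTerm, gb2_eq_zero_of_lt h]

lemma altTerm_succ_zero (n : ℕ) : altTerm (n+1) 0 = (1 + C ((2:ℚ)^n - 1) * X) * altTerm n 0 := by
  simp only [altTerm, gb2_zero_right, Nat.sub_zero, prod_range_succ]
  ring

lemma altTerm_succ_succ (n k : ℕ) :
    altTerm (n+1) (k+1) = (1 + C ((2:ℚ)^(n-(k+1)) - 1) * X) * altTerm n (k+1)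
      - C ((2:ℚ)^(n-k)) * X * altTerm n k := by
  have hpascal : C (gb2 (n+1) (k+1)) = C (gb2 n (k+1)) + C ((2:ℚ)^(n-k)) * C (gb2 n k) := by
    rw [gb2_pascal, map_add, map_mul]
  rcases lt_or_ge k n with hk | hk
  · obtain ⟨m, rfl⟩ : ∃ m, n = k + 1 + m := ⟨n - (k+1), by omega⟩
    simp only [altTerm, hpascal, show k + 1 + m + 1 - (k+1) = m + 1 by omega,
      show k + 1 + m - k = m + 1 by omega, Nat.add_sub_cancel_left, prod_range_succ]
    ring
  · have hlt := Nat.lt_succ_of_le hk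
    simp only [altTerm_eq_zero_of_lt hlt, mul_zero]
    simp only [altTerm, hpascal, gb2_eq_zero_of_lt hlt, map_zero, Nat.add_sub_add_right]
    ring

lemma sum_altTerm_succ (n : ℕ) :
    ∑ k ∈ range (n+2), altTerm (n+1) k = (1 - X) * ∑ k ∈ range (n+1), altTerm n k := by
  set c : ℕ → ℚ[X] := fun k => 1 + C ((2:ℚ)^(n-k) - 1) * X
  have hshift : ∑ k ∈ range (n+1), c (k+1) * altTerm n (k+1) + c 0 * altTerm n 0
      = ∑ k ∈ range (n+1), c k * altTerm n k := by
    rw [← sum_range_succ' (fun k => c k * altTerm n k), sum_range_succ,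
      altTerm_eq_zero_of_lt n.lt_succ_self, mul_zero, add_zero]
  calc ∑ k ∈ range (n+2), altTerm (n+1) k
      = ∑ k ∈ range (n+1), (c (k+1) * altTerm n (k+1) - C ((2:ℚ)^(n-k)) * X * altTerm n k)
          + c 0 * altTerm n 0 := by
        simp only [sum_range_succ' _ (n+1), altTerm_succ_succ, altTerm_succ_zero, c, Nat.sub_zero]
    _ = ∑ k ∈ range (n+1), (c k - C ((2:ℚ)^(n-k)) * X) * altTerm n k := by
        rw [sum_sub_distrib, sub_add_eq_add_sub, hshift, ← sum_sub_distrib]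
        simp only [sub_mul]
    _ = (1 - X) * ∑ k ∈ range (n+1), altTerm n k := by
        rw [mul_sum]
        refine sum_congr rfl fun k _ => ?_
        simp only [c, map_sub, map_one]
        ring

lemma sum_altTerm (n : ℕ) : ∑ k ∈ range (n+1), altTerm n k = (1 - X)^n := by
  induction n with
  | zero => simp [altTerm, gb2_zero_right]
  | succ n ih => rw [sum_altTerm_succ, ih, pow_succ']

theorem stmt0_general (n : ℕ) :
    ∑ k ∈ Finset.range (n+1),
      (-1 : ℚ[X])^k * C (gb2 n k) * X^k *
        ∏ i ∈ Finset.range (n-k), (1 + C ((2:ℚ)^i - 1) * X)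
    = (1 - X)^n :=
  sum_altTerm n

/-- `∑_{k=0}^n (-1)^k [n choose k] x^k ∏_{i=1}^{n-k} (1+(2^{i-1}-1)x) = (1-x)^n` in `ℚ[x]`. -/
theorem stmt0 (n : ℕ) (hn : 1 ≤ n) :
    ∑ k ∈ Finset.range (n+1),
      (-1 : ℚ[X])^k * C (gb2 n k) * X^k *
        ∏ i ∈ Finset.range (n-k), (1 + C ((2:ℚ)^i - 1) * X)
    = (1 - X)^n :=
  stmt0_general n
end

section
/- Let $G^* = (\mathbb{Z}/2)^n \setminus \{0\}$ viewed as nonzero elements of an $\mathbb{F}_2$-vector space, and let $R_n = \mathbb{F}_2[x_\alpha \mid \alpha \in G^*]/(x_\alpha x_\beta + x_\alpha x_\gamma + x_\beta x_\gamma \mid \alpha+\beta+\gamma = 0,\ \alpha,\beta,\gamma \text{ distinct nonzero})$. If $\{\alpha_1,\dots,\alpha_k\}$, $k \geq 3$, is a minimal linearly dependent subset of $G^*$ (i.e., $\alpha_1 + \cdots + \alpha_k = 0$ and every proper subset is linearly independent), then the $(k-1)$st elementary symmetric polynomial satisfies $\sigma_{k-1}(x_{\alpha_1},\dots,x_{\alpha_k})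 = 0$ in $R_n$. -/
open MvPolynomial

/-- Nonzero elements of `(ℤ/2)^n`. -/
abbrev Vn (n : ℕ) := {v : Fin n → ZMod 2 // v ≠ 0}

/-- The ideal of relations `x_α x_β + x_α x_γ + x_β x_γ` for nonzero `α+β+γ = 0`. -/
noncomputable def relIdeal (n : ℕ) : Ideal (MvPolynomial (Vn n) (ZMod 2)) :=
  Ideal.span {p | ∃ a b c : Vn n, (a : Fin n → ZMod 2) + b + c = 0 ∧
    p = X a * X b + X a * X c + X b * X c}

/-!
In characteristic 2 the defining relation of `R_n` for `u + v + w = 0` reads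
`x_u x_v = x_{u+v} (x_u + x_v)`. The prefix sums `s_m = α_1 + ⋯ + α_m` are nonzero for `m < k`
by minimality, so induction on the number of variables gives the factorization
`σ_{k-1}(x_{α_1}, …, x_{α_k}) = ∏_{m=1}^{k-1} (x_{s_m} + x_{α_{m+1}})`.
Its last factor is `x_{α_k} + x_{α_k} = 0`, since `s_{k-1} = α_k`.
-/

open Finset

section esymmPred

variable {A : Type*} [CommRing A]

/-- `esymmPred x N` is `σ_{N-1}(x 0, …, x (N-1))`. -/
def esymmPred (x : ℕ → A) (N : ℕ) : A :=
  ∑ j ∈ range N, ∏ i ∈ (range N).erase j, x i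

theorem esymmPred_one (x : ℕ → A) : esymmPred x 1 = 1 := by
  simp [esymmPred]

theorem esymmPred_succ (x : ℕ → A) (N : ℕ) :
    esymmPred x (N + 1) = esymmPred x N * x N + ∏ i ∈ range N, x i := by
  have hlast : (range (N + 1)).erase N = range N := by
    rw [range_add_one, erase_insert notMem_range_self]
  have hlt : ∀ j ∈ range N, (range (N + 1)).erase j = insert N ((range N).erase j) := by
    intro j hj
    rw [range_add_one, erase_insert_of_ne (mem_range.mp hj).ne']
  rw [esymmPred, sum_range_succ, hlast, esymmPred, sum_mul]
  congr 1
  refine sum_congr rfl fun j hj => ?_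
  rw [hlt j hj, prod_insert (by simp), mul_comm]

theorem sum_univ_prod_erase_eq_esymmPred (x : ℕ → A) (N : ℕ) :
    ∑ j : Fin N, ∏ i ∈ univ.erase j, x i = esymmPred x N := by
  rw [esymmPred, ← Fin.sum_univ_eq_sum_range]
  refine sum_congr rfl fun j _ => ?_
  rw [← Nat.Iio_eq_range, ← Fin.map_valEmbedding_univ,
    show (j : ℕ) = Fin.valEmbedding j from rfl, ← map_erase, prod_map]
  rfl

section Factorization

variable (x y : ℕ → A)

theorem mul_prod_range_add_eq_prod_range {N : ℕ}
    (hy0 : y 0 = x 0) (hrel : ∀ m < N, y m * x (m + 1) = y (m + 1) * (y m + x (m + 1))) :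
    y N * ∏ m ∈ range N, (y m + x (m + 1)) = ∏ i ∈ range (N + 1), x i := by
  induction N with
  | zero => simp [hy0]
  | succ N ih =>
    rw [prod_range_succ, prod_range_succ, ← ih fun m hm => hrel m (by omega)]
    linear_combination -(∏ m ∈ range N, (y m + x (m + 1))) * hrel N (by omega)

theorem esymmPred_eq_prod_range {N : ℕ}
    (hy0 : y 0 = x 0) (hrel : ∀ m < N, y m * x (m + 1) = y (m + 1) * (y m + x (m + 1))) :
    esymmPred x (N + 2) = ∏ m ∈ range (N + 1), (y m + x (m + 1)) := by
  induction N with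
  | zero => simp [esymmPred_succ x 1, esymmPred_one, hy0, add_comm]
  | succ N ih =>
    rw [esymmPred_succ, ih fun m hm => hrel m (by omega),
      prod_range_succ (fun m => y m + x (m + 1)) (N + 1),
      ← mul_prod_range_add_eq_prod_range x y hy0 hrel]
    ring

end Factorization

end esymmPred

/-- `x_v` in `R_n`, extended by the junk value `0` at `v = 0` so that it accepts prefix sums. -/
noncomputable def quotX (n : ℕ) (v : Fin n → ZMod 2) :
    MvPolynomial (Vn n) (ZMod 2) ⧸ relIdeal n :=
  if h : v = 0 then 0 else Ideal.Quotient.mk _ (X ⟨v, h⟩)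

theorem quotX_coe {n : ℕ} (a : Vn n) : quotX n a = Ideal.Quotient.mk _ (X a) :=
  dif_neg a.2

theorem quotX_mul_quotX {n : ℕ} {u v : Fin n → ZMod 2} (hu : u ≠ 0) (hv : v ≠ 0)
    (huv : u + v ≠ 0) :
    quotX n u * quotX n v = quotX n (u + v) * (quotX n u + quotX n v) := by
  have hmem : X ⟨u, hu⟩ * X ⟨v, hv⟩ + X ⟨u, hu⟩ * X ⟨u + v, huv⟩
      + X ⟨v, hv⟩ * X ⟨u + v, huv⟩ ∈ relIdeal n :=
    Ideal.subset_span ⟨_, _, _, ZModModule.add_self (u + v), rfl⟩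
  have h := Ideal.Quotient.eq_zero_iff_mem.mpr hmem
  simp only [map_add, map_mul, ← quotX_coe] at h
  linear_combination h - ZModModule.add_self (quotX n (u + v) * (quotX n u + quotX n v))

theorem esymmPred_mk_X_eq_zero {n : ℕ} (a : ℕ → Vn n) (N : ℕ)
    (hsum : ∑ i ∈ range (N + 2), (a i : Fin n → ZMod 2) = 0)
    (hpre : ∀ m, 0 < m → m < N + 2 → ∑ i ∈ range m, (a i : Fin n → ZMod 2) ≠ 0) :
    esymmPred (fun i => Ideal.Quotient.mk (relIdeal n) (X (a i))) (N + 2) = 0 := by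
  set s : ℕ → Fin n → ZMod 2 := fun m => ∑ i ∈ range m, (a i : Fin n → ZMod 2)
  simp_rw [← quotX_coe]
  rw [esymmPred_eq_prod_range _ (fun m => quotX n (s (m + 1)))]
  · have hlast : s (N + 1) = a (N + 1) := by
      rwa [sum_range_succ, ← ZModModule.sub_eq_add, sub_eq_zero] at hsum
    exact prod_eq_zero (mem_range.mpr N.lt_succ_self) (by rw [hlast, ZModModule.add_self])
  · simp [s]
  · intro m hm
    have hstep : s (m + 2) = s (m + 1) + a (m + 1) := sum_range_succ _ _
    rw [hstep]
    exact quotX_mul_quotX (hpre _ m.succ_pos (by omega)) (a (m + 1)).2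
      (hstep ▸ hpre (m + 2) (by omega) (by omega))

theorem sum_range_ne_zero_of_linearIndependent {K M : Type*} [Ring K] [Nontrivial K]
    [AddCommGroup M] [Module K M] {N : ℕ} (v : Fin (N + 1) → M)
    (hv : LinearIndependent K fun i : {i // i ≠ Fin.last N} => v i) {m : ℕ} (hm0 : 0 < m)
    (hm : m ≤ N) : ∑ i ∈ range m, v (Fin.ofNat (N + 1) i) ≠ 0 := by
  have hmN : m ≤ N + 1 := by omega
  have hu : LinearIndependent K fun i : Fin m => v (Fin.castLE hmN i) :=
    hv.comp (fun i => ⟨Fin.castLE hmN i, Fin.ne_of_val_ne (by simp; omega)⟩)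
      fun i j hij => Fin.castLE_injective hmN (congrArg Subtype.val hij)
  have hsum : ∑ i ∈ range m, v (Fin.ofNat (N + 1) i) = ∑ i : Fin m, v (Fin.castLE hmN i) := by
    rw [← Fin.sum_univ_eq_sum_range]
    refine sum_congr rfl fun i _ => congrArg v (Fin.ext ?_)
    simp [Nat.mod_eq_of_lt (show (i : ℕ) < N + 1 by omega)]
  intro h
  rw [hsum] at h
  have := Fintype.linearIndependent_iff.mp hu (fun _ => 1) (by simpa using h) ⟨0, hm0⟩
  exact one_ne_zero this

theorem stmt3_general (n k : ℕ) (hk : 3 ≤ k) (α : Fin k → Vn n)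
    (hsum : ∑ i, (α i : Fin n → ZMod 2) = 0)
    (hmin : ∀ j : Fin k,
      LinearIndependent (ZMod 2) (fun i : {i : Fin k // i ≠ j} =>
        ((α i : Vn n) : Fin n → ZMod 2))) :
    ∑ j : Fin k, ∏ i ∈ Finset.univ.erase j,
      Ideal.Quotient.mk (relIdeal n) (X (α i)) = 0 := by
  obtain ⟨N, rfl⟩ : ∃ N, k = N + 2 := ⟨k - 2, by omega⟩
  set a : ℕ → Vn n := fun i => α (Fin.ofNat (N + 2) i)
  have ha : ∀ i : Fin (N + 2), a i = α i := fun i => by simp [a]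
  simp only [← ha, sum_univ_prod_erase_eq_esymmPred (fun i => Ideal.Quotient.mk _ (X (a i)))]
  refine esymmPred_mk_X_eq_zero a N ?_ fun m hm0 hm => ?_
  · simpa only [← ha, Fin.sum_univ_eq_sum_range (fun i => (a i : Fin n → ZMod 2))] using hsum
  · exact sum_range_ne_zero_of_linearIndependent (fun i => (α i : Fin n → ZMod 2))
      (hmin (Fin.last _)) hm0 (by omega)

/-- If `{α₁,…,α_k}` (`k ≥ 3`) is a minimal linearly dependent subset of nonzero vectors
(sum zero, every proper subset linearly independent), then the `(k-1)`st elementary symmetric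
polynomial `σ_{k-1}(x_{α₁},…,x_{α_k}) = ∑_j ∏_{i ≠ j} x_{α_i}` vanishes in `R_n`. -/
theorem stmt3 (n k : ℕ) (hk : 3 ≤ k) (α : Fin k → Vn n)
    (hinj : Function.Injective α)
    (hsum : ∑ i, (α i : Fin n → ZMod 2) = 0)
    (hmin : ∀ j : Fin k,
      LinearIndependent (ZMod 2) (fun i : {i : Fin k // i ≠ j} =>
        ((α i : Vn n) : Fin n → ZMod 2))) :
    ∑ j : Fin k, ∏ i ∈ Finset.univ.erase j,
      Ideal.Quotient.mk (relIdeal n) (X (α i)) = 0 :=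
  stmt3_general n k hk α hsum hmin
end

section
/- Let $Q_n$ be the $\mathbb{F}_2$-vector space with basis $\{y_S \mid S \subseteq (\mathbb{Z}/2)^n \setminus \{0\}\}$, and define $\partial(y_S) = \sum \{ y_{S\setminus\{s\}} : s \in S,\ \mathrm{span}(S \setminus \{s\}) = \mathrm{span}(S) \}$. Then $\partial \circ \partial = 0$, and the homology of $(Q_n, \partial)$ is the $\mathbb{F}_2$-vector space freely generated by the classes $y_S$ where $S$ ranges over linearly independent subsets of $(\mathbb{Z}/2)^n \setminus \{0\}$ in row echelon form with respect to the reversed order of columns. -/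
open MvPolynomial

/-- The `𝔽₂`-span of a finite set of nonzero vectors of `(ℤ/2)^n`. -/
noncomputable def spanOf (n : ℕ) (S : Finset (Vn n)) : Submodule (ZMod 2) (Fin n → ZMod 2) :=
  Submodule.span (ZMod 2) ((fun v : Vn n => (v : Fin n → ZMod 2)) '' ↑S)

open scoped Classical in
/-- The differential `∂(y_S) = ∑ { y_{S \ {s}} : s ∈ S, span(S \ {s}) = span S }`. -/
noncomputable def pdmap (n : ℕ) :
    (Finset (Vn n) →₀ ZMod 2) →ₗ[ZMod 2] (Finset (Vn n) →₀ ZMod 2) :=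
  Finsupp.lsum (ZMod 2) fun S => ∑ s ∈ S,
    if spanOf n (S.erase s) = spanOf n S then Finsupp.lsingle (S.erase s) else 0

/-- The position of the last nonzero coordinate ("pivot", with respect to reversed column
order) of a vector in `(ℤ/2)^n`. -/
noncomputable def pivot (n : ℕ) (v : Fin n → ZMod 2) : WithBot (Fin n) :=
  (Finset.univ.filter fun i => v i ≠ 0).max

/-- A finite set of nonzero vectors is in (not necessarily reduced) row echelon form
with respect to reversed column order iff its elements have pairwise distinct pivots.
Such sets are automatically linearly independent, and they are exactly the members
of the inductively defined family `F_n` of the paper. -/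
def Echelon (n : ℕ) (S : Finset (Vn n)) : Prop :=
  Set.InjOn (fun v : Vn n => pivot n (v : Fin n → ZMod 2)) ↑S

/-- The homology of `(Q_n, ∂)` (one module: `ker ∂ / im ∂`). -/
abbrev Hmlgy (n : ℕ) :=
  ↥(LinearMap.ker (pdmap n)) ⧸
    (Submodule.comap (LinearMap.ker (pdmap n)).subtype (LinearMap.range (pdmap n)) :
      Submodule (ZMod 2) ↥(LinearMap.ker (pdmap n)))

/-!
Discrete Morse theory on the basis `y_S`. For nonempty `S` let `x` be the nonzero vector of
`span S` of least pivot; it is unique, since two such vectors add up to one of smaller pivot.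
Match `S` with `S ∪ {x}` if `x ∉ S`, with `S \ {x}` if `x ∈ S` is redundant, and otherwise as
`S \ {x}` is matched. The unmatched sets are exactly the echelon ones. Every term of
`∂ y_{S ∪ {x}}` other than `y_S` replaces an element of `S` by `x`, which has smaller pivot, so
the matching is acyclic and the Morse homotopy `H` is well defined. Then `R = 1 - ∂H - H∂` is
homotopic to the identity, takes values in the span of the echelon `y_S` and fixes it; hence the
echelon classes form a basis of the homology.
-/

theorem Finset.sum_sum_erase_eq_zero_of_antisymm {α M : Type*} [DecidableEq α] [AddCommGroup M]
    (s : Finset α) (f : α → α → M) (hf : ∀ a b, f b a = -f a b) :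
    ∑ a ∈ s, ∑ b ∈ s.erase a, f a b = 0 := by
  rw [Finset.sum_sigma']
  refine Finset.sum_involution (fun p _ => ⟨p.2, p.1⟩)
    (fun p _ => by rw [hf p.1 p.2, add_neg_cancel]) ?_ ?_ fun _ _ => rfl
  · rintro ⟨a, b⟩ hp - h
    exact (Finset.mem_erase.1 (Finset.mem_sigma.1 hp).2).1 (congrArg Sigma.fst h)
  · rintro ⟨a, b⟩ hp
    rw [Finset.mem_sigma, Finset.mem_erase] at hp ⊢
    exact ⟨hp.2.2, hp.2.1.symm, hp.1⟩

theorem Submodule.mem_span_of_mem_span_insert {K V : Type*} [DivisionRing K] [AddCommGroup V]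
    [Module K V] {U : Submodule K V} {s : Set V} {x v : V} (hs : span K s ≤ U) (hx : x ∉ U)
    (hv : v ∈ span K (insert x s)) (hvU : v ∈ U) : v ∈ span K s := by
  by_contra h
  exact hx <| span_le.2 (Set.insert_subset hvU (subset_span.trans hs)) <|
    mem_span_insert_exchange hv h

theorem exists_basis_homology {ι R M : Type*} [Ring R] [AddCommGroup M] [Module R M]
    (d : M →ₗ[R] M) (v : ι → M) (hv : LinearIndependent R v)
    (hcyc : ∀ i, v i ∈ LinearMap.ker d)
    (hdisj : Disjoint (Submodule.span R (Set.range v)) (LinearMap.range d))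
    (hspan : LinearMap.ker d ≤ Submodule.span R (Set.range v) ⊔ LinearMap.range d) :
    ∃ b : Module.Basis ι R (LinearMap.ker d ⧸
        (Submodule.comap (LinearMap.ker d).subtype (LinearMap.range d))),
      ∀ i, b i = Submodule.Quotient.mk ⟨v i, hcyc i⟩ := by
  let u : ι → LinearMap.ker d := fun i => ⟨v i, hcyc i⟩
  have hmap : (Submodule.span R (Set.range u)).map (LinearMap.ker d).subtype =
      Submodule.span R (Set.range v) := by
    rw [Submodule.map_span, ← Set.range_comp]; rfl
  have hu : LinearIndependent R u := LinearIndependent.of_comp (LinearMap.ker d).subtype hv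
  refine ⟨Module.Basis.mk (v := Submodule.mkQ _ ∘ u) (hu.map ?_) ?_,
    fun i => Module.Basis.mk_apply ..⟩
  · rw [Submodule.ker_mkQ, Submodule.disjoint_def]
    intro z hz hz'
    exact Subtype.ext <| Submodule.disjoint_def.1 hdisj z (hmap ▸ Submodule.mem_map_of_mem hz) hz'
  · rintro c -
    obtain ⟨z, rfl⟩ := Submodule.mkQ_surjective _ c
    obtain ⟨e, he, _, ⟨q, rfl⟩, hz⟩ := Submodule.mem_sup.1 (hspan z.2)
    rw [← hmap] at he
    obtain ⟨e', he', rfl⟩ := he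
    rw [Set.range_comp, ← Submodule.map_span]
    refine ⟨e', he', (Submodule.Quotient.eq _).2 ?_⟩
    have hz : (e' : M) + d q = z := hz
    show (e' : M) - z ∈ LinearMap.range d
    rw [← hz, sub_add_cancel_left]
    exact neg_mem ⟨q, rfl⟩

variable {n : ℕ}

theorem pivot_le_iff {v : Fin n → ZMod 2} {p : WithBot (Fin n)} :
    pivot n v ≤ p ↔ ∀ i : Fin n, p < i → v i = 0 := by
  refine ⟨fun h i hi => ?_, fun h => Finset.max_le fun i hi => ?_⟩
  · by_contra hv
    exact (Finset.le_max (by simpa using hv)).trans h |>.not_gt hi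
  · exact not_lt.1 fun hlt => (Finset.mem_filter.1 hi).2 (h i hlt)

theorem le_pivot_of_ne_zero {v : Fin n → ZMod 2} {i : Fin n} (hv : v i ≠ 0) :
    (i : WithBot (Fin n)) ≤ pivot n v :=
  Finset.le_max (by simpa using hv)

theorem apply_pivot_ne_zero {v : Fin n → ZMod 2} {i : Fin n} (h : pivot n v = i) : v i ≠ 0 :=
  (Finset.mem_filter.1 (Finset.mem_of_max h)).2

theorem pivot_eq_bot_iff {v : Fin n → ZMod 2} : pivot n v = ⊥ ↔ v = 0 := by
  rw [← le_bot_iff, pivot_le_iff, funext_iff]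
  exact forall_congr' fun i => by simp [WithBot.bot_lt_coe]

theorem pivot_add_le (u v : Fin n → ZMod 2) :
    pivot n (u + v) ≤ max (pivot n u) (pivot n v) :=
  pivot_le_iff.2 fun i hi => by
    rw [Pi.add_apply, pivot_le_iff.1 le_rfl i ((le_max_left _ _).trans_lt hi),
      pivot_le_iff.1 le_rfl i ((le_max_right _ _).trans_lt hi), add_zero]

theorem pivot_add_of_ne {u v : Fin n → ZMod 2} (h : pivot n u ≠ pivot n v) :
    pivot n (u + v) = max (pivot n u) (pivot n v) := by
  wlog huv : pivot n u < pivot n v generalizing u v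
  · rw [add_comm, max_comm]
    exact this h.symm (lt_of_le_of_ne (not_lt.1 huv) h.symm)
  obtain ⟨i, hi⟩ := WithBot.ne_bot_iff_exists.1 huv.ne_bot
  refine (pivot_add_le u v).antisymm ?_
  rw [max_eq_right huv.le, ← hi]
  refine le_pivot_of_ne_zero ?_
  rw [Pi.add_apply, pivot_le_iff.1 (le_refl (pivot n u)) i (hi ▸ huv), zero_add]
  exact apply_pivot_ne_zero hi.symm

theorem pivot_add_lt_of_eq {u v : Fin n → ZMod 2} (h : pivot n u = pivot n v) (hu : u ≠ 0) :
    pivot n (u + v) < pivot n u := by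
  obtain ⟨i, hi⟩ := WithBot.ne_bot_iff_exists.1 (mt pivot_eq_bot_iff.1 hu)
  have hle : pivot n (u + v) ≤ pivot n u := (pivot_add_le u v).trans_eq (by rw [h, max_self])
  refine lt_of_le_of_ne hle fun heq => apply_pivot_ne_zero (heq.trans hi.symm) ?_
  have hui := apply_pivot_ne_zero hi.symm
  have hvi := apply_pivot_ne_zero (h ▸ hi.symm)
  rw [Pi.add_apply]
  generalize u i = a at hui
  generalize v i = b at hvi
  revert a b; decide

theorem mem_spanOf {S : Finset (Vn n)} {s : Vn n} (hs : s ∈ S) : s.1 ∈ spanOf n S :=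
  Submodule.subset_span ⟨s, hs, rfl⟩

theorem spanOf_mono {S T : Finset (Vn n)} (h : S ⊆ T) : spanOf n S ≤ spanOf n T :=
  Submodule.span_mono (Set.image_mono (Finset.coe_subset.2 h))

theorem spanOf_insert (x : Vn n) (S : Finset (Vn n)) :
    spanOf n (insert x S) =
      Submodule.span (ZMod 2) (insert x.1 ((fun v : Vn n => v.1) '' ↑S)) := by
  rw [spanOf, Finset.coe_insert, Set.image_insert_eq]

theorem spanOf_insert_of_mem {x : Vn n} {S : Finset (Vn n)} (hx : x.1 ∈ spanOf n S) :
    spanOf n (insert x S) = spanOf n S := by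
  rw [spanOf_insert, Submodule.span_insert_eq_span hx, spanOf]

theorem exists_subset_sum_eq_of_mem_spanOf {S : Finset (Vn n)} {w : Fin n → ZMod 2}
    (hw : w ∈ spanOf n S) : ∃ T ⊆ S, ∑ t ∈ T, t.1 = w := by
  classical
  obtain ⟨c, rfl⟩ := (Submodule.mem_span_image_finset_iff_exists_fun' (ZMod 2)).1 hw
  refine ⟨{t ∈ S | c t = 1}, Finset.filter_subset _ _, ?_⟩
  rw [Finset.sum_filter]
  refine Finset.sum_congr rfl fun t _ => ?_
  rcases (by decide : ∀ a : ZMod 2, a = 0 ∨ a = 1) (c t) with h | h <;> simp [h]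

def Redundant (S : Finset (Vn n)) (s : Vn n) : Prop :=
  spanOf n (S.erase s) = spanOf n S

theorem redundant_iff {S : Finset (Vn n)} {s : Vn n} (hs : s ∈ S) :
    Redundant S s ↔ s.1 ∈ spanOf n (S.erase s) := by
  refine ⟨fun h => h ▸ mem_spanOf hs, fun h => ?_⟩
  rw [Redundant, ← spanOf_insert_of_mem h, Finset.insert_erase hs]

theorem redundant_and_redundant_erase_iff {S : Finset (Vn n)} {s t : Vn n} :
    Redundant S s ∧ Redundant (S.erase s) t ↔ spanOf n ((S.erase s).erase t) = spanOf n S := by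
  refine ⟨fun ⟨hs, ht⟩ => ht.trans hs, fun h => ?_⟩
  have hs : Redundant S s := le_antisymm (spanOf_mono (S.erase_subset s))
    (h ▸ spanOf_mono ((S.erase s).erase_subset t))
  exact ⟨hs, h.trans hs.symm⟩

theorem Echelon.subset {S T : Finset (Vn n)} (hS : Echelon n S) (h : T ⊆ S) : Echelon n T :=
  hS.mono (Finset.coe_subset.2 h)

theorem Echelon.pivot_sum {T : Finset (Vn n)} (hT : Echelon n T) :
    pivot n (∑ t ∈ T, t.1) = T.sup fun t => pivot n t := by
  induction T using Finset.induction_on with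
  | empty => simp [pivot_eq_bot_iff]
  | insert a T ha ih =>
    have ih := ih (hT.subset (T.subset_insert a))
    rw [Finset.sum_insert ha, Finset.sup_insert, ← ih]
    refine pivot_add_of_ne fun h => ?_
    rw [ih] at h
    rcases T.eq_empty_or_nonempty with rfl | hne
    · exact a.2 (pivot_eq_bot_iff.1 h)
    obtain ⟨t, ht, htsup⟩ := Finset.exists_mem_eq_sup T hne fun t => pivot n t
    exact (ne_of_mem_of_not_mem ht ha).symm <| hT (by simp) (by simp [ht]) (h.trans htsup)

theorem Echelon.exists_pivot_eq {S : Finset (Vn n)} (hS : Echelon n S) {w : Fin n → ZMod 2}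
    (hw : w ∈ spanOf n S) (hw0 : w ≠ 0) : ∃ s ∈ S, pivot n s = pivot n w := by
  obtain ⟨T, hTS, rfl⟩ := exists_subset_sum_eq_of_mem_spanOf hw
  have hne : T.Nonempty := Finset.nonempty_iff_ne_empty.2 fun h => hw0 (by simp [h])
  obtain ⟨t, ht, htsup⟩ := Finset.exists_mem_eq_sup T hne fun t => pivot n t
  exact ⟨t, hTS ht, by rw [(hS.subset hTS).pivot_sum, htsup]⟩

theorem Echelon.not_redundant {S : Finset (Vn n)} (hS : Echelon n S) {s : Vn n} (hs : s ∈ S) :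
    ¬ Redundant S s := by
  rw [redundant_iff hs]
  intro h
  obtain ⟨t, ht, hts⟩ := (hS.subset (S.erase_subset s)).exists_pivot_eq h s.2
  exact Finset.ne_of_mem_erase ht <| hS (Finset.mem_of_mem_erase ht) hs hts

def IsLead (W : Submodule (ZMod 2) (Fin n → ZMod 2)) (x : Vn n) : Prop :=
  x.1 ∈ W ∧ ∀ v : Vn n, v.1 ∈ W → pivot n x ≤ pivot n v

theorem IsLead.pivot_lt {W : Submodule (ZMod 2) (Fin n → ZMod 2)} {x v : Vn n}
    (hx : IsLead W x) (hv : v.1 ∈ W) (hvx : v ≠ x) : pivot n x < pivot n v := by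
  refine lt_of_le_of_ne (hx.2 v hv) fun h => ?_
  have hne : x.1 + v.1 ≠ 0 := fun h0 =>
    hvx <| Subtype.ext <| sub_eq_zero.1 <| by rw [ZModModule.sub_eq_add, add_comm, h0]
  exact (hx.2 ⟨_, hne⟩ (W.add_mem hx.1 hv)).not_gt (pivot_add_lt_of_eq h x.2)

theorem IsLead.unique {W : Submodule (ZMod 2) (Fin n → ZMod 2)} {x y : Vn n} (hx : IsLead W x)
    (hy : IsLead W y) : x = y :=
  by_contra fun h => (hx.pivot_lt hy.1 (Ne.symm h)).not_ge (hy.2 x hx.1)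

theorem exists_isLead {S : Finset (Vn n)} (hS : S.Nonempty) : ∃ x, IsLead (spanOf n S) x := by
  classical
  obtain ⟨s, hs⟩ := hS
  obtain ⟨x, hx, hmin⟩ := Finset.exists_min_image {v : Vn n | v.1 ∈ spanOf n S}
    (fun v => pivot n v) ⟨s, by simpa using mem_spanOf hs⟩
  exact ⟨x, by simpa using hx, fun v hv => hmin v (by simpa using hv)⟩

theorem not_isLead_spanOf_empty (x : Vn n) : ¬ IsLead (spanOf n ∅) x := fun hx =>
  x.2 (by simpa [spanOf] using hx.1)

theorem Echelon.mem_of_isLead {S : Finset (Vn n)} {x : Vn n} (hS : Echelon n S)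
    (hx : IsLead (spanOf n S) x) : x ∈ S := by
  obtain ⟨s, hs, hsx⟩ := hS.exists_pivot_eq hx.1 x.2
  have hs' : IsLead (spanOf n S) s := ⟨mem_spanOf hs, fun v hv => hsx ▸ hx.2 v hv⟩
  exact hs'.unique hx ▸ hs

theorem echelon_of_isLead {S : Finset (Vn n)} {x : Vn n} (hx : IsLead (spanOf n S) x)
    (hxS : x ∈ S) (hS : Echelon n (S.erase x)) : Echelon n S := by
  rw [Echelon, ← Finset.insert_erase hxS, Finset.coe_insert, Set.injOn_insert (by simp)]
  refine ⟨hS, fun ⟨s, hs, hsx⟩ => ?_⟩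
  exact (hx.pivot_lt (mem_spanOf (Finset.mem_of_mem_erase hs)) (Finset.ne_of_mem_erase hs)).ne
    hsx.symm

/-- `up x`: `S` is matched with `insert x S`; `down x`: `S` is matched with `S.erase x`. -/
inductive MorseStatus (n : ℕ) where
  | critical
  | up (x : Vn n)
  | down (x : Vn n)

open Classical in
noncomputable def morseStatus (S : Finset (Vn n)) : MorseStatus n :=
  if h : ∃ x, IsLead (spanOf n S) x then
    if h.choose ∈ S then
      if Redundant S h.choose then .down h.choose else morseStatus (S.erase h.choose)
    else .up h.choose
  else .critical
termination_by S.card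
decreasing_by exact Finset.card_erase_lt_of_mem ‹_›

theorem morseStatus_empty : morseStatus (∅ : Finset (Vn n)) = .critical := by
  rw [morseStatus, dif_neg fun ⟨x, hx⟩ => not_isLead_spanOf_empty x hx]

open Classical in
theorem morseStatus_eq {S : Finset (Vn n)} {x : Vn n} (hx : IsLead (spanOf n S) x) :
    morseStatus S = if x ∈ S then
      if Redundant S x then .down x else morseStatus (S.erase x) else .up x := by
  have h : ∃ x, IsLead (spanOf n S) x := ⟨x, hx⟩
  rw [morseStatus, dif_pos h, h.choose_spec.unique hx]

theorem morseStatus_eq_critical_iff {S : Finset (Vn n)} :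
    morseStatus S = .critical ↔ Echelon n S := by
  rcases S.eq_empty_or_nonempty with rfl | hne
  · simp [morseStatus_empty, Echelon]
  obtain ⟨x, hx⟩ := exists_isLead hne
  rw [morseStatus_eq hx]
  by_cases hxS : x ∈ S
  · by_cases hr : Redundant S x
    · simpa [hxS, hr] using fun hS => hS.not_redundant hxS hr
    · rw [if_pos hxS, if_neg hr, morseStatus_eq_critical_iff]
      exact ⟨echelon_of_isLead hx hxS, fun hS => hS.subset (S.erase_subset x)⟩
  · simpa [hxS] using fun hS => hxS (hS.mem_of_isLead hx)
termination_by S.card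
decreasing_by exact Finset.card_erase_lt_of_mem hxS

theorem morseStatus_eq_up {S : Finset (Vn n)} {x : Vn n} (h : morseStatus S = .up x) :
    x ∉ S ∧ x.1 ∈ spanOf n S ∧
      ∀ s ∈ S, Redundant (insert x S) s → pivot n x < pivot n s := by
  rcases S.eq_empty_or_nonempty with rfl | hne
  · simp [morseStatus_empty] at h
  obtain ⟨m, hm⟩ := exists_isLead hne
  rw [morseStatus_eq hm] at h
  by_cases hmS : m ∈ S
  · by_cases hr : Redundant S m
    · simp [hmS, hr] at h
    rw [if_pos hmS, if_neg hr] at h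
    obtain ⟨hxS, hx, hlt⟩ := morseStatus_eq_up h
    rw [redundant_iff hmS] at hr
    have hxm : x ≠ m := by rintro rfl; exact hr hx
    have hspan : spanOf n (insert x (S.erase m)) = spanOf n (S.erase m) := spanOf_insert_of_mem hx
    refine ⟨fun h => hxS (Finset.mem_erase.2 ⟨hxm, h⟩), spanOf_mono (S.erase_subset m) hx,
      fun s hs hsr => ?_⟩
    rw [redundant_iff (Finset.mem_insert_of_mem hs)] at hsr
    obtain rfl | hsm := eq_or_ne s m
    · rw [Finset.erase_insert_of_ne hxm, hspan] at hsr
      exact absurd hsr hr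
    have hsm' : s ∈ S.erase m := Finset.mem_erase.2 ⟨hsm, hs⟩
    refine hlt s hsm' ((redundant_iff (Finset.mem_insert_of_mem hsm')).2 ?_)
    have hset : (insert x S).erase s = insert m ((insert x (S.erase m)).erase s) := by
      rw [← Finset.erase_insert_of_ne hsm.symm, Finset.insert_comm, Finset.insert_erase hmS]
    rw [hset, spanOf_insert] at hsr
    exact Submodule.mem_span_of_mem_span_insert
      ((spanOf_mono (Finset.erase_subset _ _)).trans hspan.le) hr hsr (mem_spanOf hsm')
  · rw [if_neg hmS] at h
    cases h
    exact ⟨hmS, hm.1, fun s hs _ => hm.pivot_lt (mem_spanOf hs) (ne_of_mem_of_not_mem hs hmS)⟩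
termination_by S.card
decreasing_by exact Finset.card_erase_lt_of_mem hmS

theorem morseStatus_eq_down {S : Finset (Vn n)} {x : Vn n} (h : morseStatus S = .down x) :
    x ∈ S ∧ morseStatus (S.erase x) = .up x := by
  rcases S.eq_empty_or_nonempty with rfl | hne
  · simp [morseStatus_empty] at h
  obtain ⟨m, hm⟩ := exists_isLead hne
  rw [morseStatus_eq hm] at h
  by_cases hmS : m ∈ S
  · by_cases hr : Redundant S m
    · simp only [if_pos hmS, if_pos hr, MorseStatus.down.injEq] at h
      subst h
      refine ⟨hmS, ?_⟩
      rw [morseStatus_eq (show IsLead (spanOf n (S.erase m)) m from hr ▸ hm),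
        if_neg (Finset.notMem_erase m S)]
    rw [if_pos hmS, if_neg hr] at h
    obtain ⟨hxS, hup⟩ := morseStatus_eq_down h
    have hxm : x ≠ m := Finset.ne_of_mem_erase hxS
    have hxS' : x ∈ S := Finset.mem_of_mem_erase hxS
    have hcomm : (S.erase x).erase m = (S.erase m).erase x := Finset.erase_right_comm
    have hxr : Redundant S x := (redundant_iff hxS').2 <|
      spanOf_mono (hcomm ▸ Finset.erase_subset _ _) (morseStatus_eq_up hup).2.1
    have hmx : m ∈ S.erase x := Finset.mem_erase.2 ⟨hxm.symm, hmS⟩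
    have hmr : ¬ Redundant (S.erase x) m := by
      rw [redundant_iff hmx, hcomm]
      exact fun h => (redundant_iff hmS).not.1 hr (spanOf_mono (Finset.erase_subset _ _) h)
    refine ⟨hxS', ?_⟩
    rw [morseStatus_eq (show IsLead (spanOf n (S.erase x)) m from hxr ▸ hm), if_pos hmx,
      if_neg hmr, hcomm, hup]
  · simp [hmS] at h
termination_by S.card
decreasing_by exact Finset.card_erase_lt_of_mem hmS

abbrev Qn (n : ℕ) := Finset (Vn n) →₀ ZMod 2

open Classical in
theorem pdmap_single (S : Finset (Vn n)) :
    pdmap n (Finsupp.single S 1) =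
      ∑ s ∈ S with Redundant S s, Finsupp.single (S.erase s) 1 := by
  rw [pdmap, Finsupp.lsum_single, LinearMap.sum_apply, Finset.sum_filter]
  refine Finset.sum_congr rfl fun s _ => ?_
  by_cases h : spanOf n (S.erase s) = spanOf n S
  · rw [if_pos h, if_pos (show Redundant S s from h), Finsupp.lsingle_apply]
  · rw [if_neg h, if_neg (show ¬Redundant S s from h), LinearMap.zero_apply]

theorem pdmap_comp_pdmap : pdmap n ∘ₗ pdmap n = 0 := by
  ext S : 2
  rw [LinearMap.comp_apply, Finsupp.lsingle_apply, LinearMap.zero_comp, LinearMap.zero_apply,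
    LinearMap.comp_apply, pdmap_single, map_sum]
  simp_rw [pdmap_single, Finset.sum_filter, Finset.ite_sum_zero, ← ite_and,
    redundant_and_redundant_erase_iff]
  refine Finset.sum_sum_erase_eq_zero_of_antisymm S _ fun s t => ?_
  rw [ZModModule.neg_eq_self, Finset.erase_right_comm]

theorem pdmap_pdmap (z : Qn n) : pdmap n (pdmap n z) = 0 :=
  LinearMap.congr_fun pdmap_comp_pdmap z

theorem pdmap_single_of_echelon {S : Finset (Vn n)} (hS : Echelon n S) :
    pdmap n (Finsupp.single S 1) = 0 := by
  classical
  rw [pdmap_single, Finset.filter_false_of_mem fun s hs => hS.not_redundant hs, Finset.sum_empty]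

open Classical in
theorem pdmap_single_insert {S : Finset (Vn n)} {x : Vn n} (hxS : x ∉ S)
    (hx : x.1 ∈ spanOf n S) :
    pdmap n (Finsupp.single (insert x S) 1) = Finsupp.single S 1 +
      ∑ s ∈ S with Redundant (insert x S) s, Finsupp.single ((insert x S).erase s) 1 := by
  have hxr : Redundant (insert x S) x := by
    rw [Redundant, Finset.erase_insert hxS, spanOf_insert_of_mem hx]
  rw [pdmap_single, Finset.filter_insert, if_pos hxr,
    Finset.sum_insert fun h => hxS (Finset.mem_filter.1 h).1, Finset.erase_insert hxS]

noncomputable def pivotRank (v : Fin n → ZMod 2) : ℕ :=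
  (Finset.univ.filter fun i : Fin n => (i : WithBot (Fin n)) ≤ pivot n v).card

theorem pivotRank_lt_pivotRank {u v : Fin n → ZMod 2} (h : pivot n u < pivot n v) :
    pivotRank u < pivotRank v := by
  obtain ⟨j, hj⟩ := WithBot.ne_bot_iff_exists.1 h.ne_bot
  apply Finset.card_lt_card
  refine (Finset.ssubset_iff_of_subset fun i hi => ?_).2 ⟨j, ?_, ?_⟩
  · simp only [Finset.mem_filter] at hi ⊢
    exact ⟨hi.1, hi.2.trans h.le⟩
  · simp [hj]
  · simp [hj ▸ h.not_ge]

noncomputable def morseWeight (S : Finset (Vn n)) : ℕ := ∑ s ∈ S, pivotRank s.1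

theorem morseWeight_erase_insert_lt {S : Finset (Vn n)} {x s : Vn n} (hxS : x ∉ S) (hs : s ∈ S)
    (h : pivot n x < pivot n s) : morseWeight ((insert x S).erase s) < morseWeight S := by
  have herase := Finset.sum_erase_add (insert x S) (fun v : Vn n => pivotRank v.1)
    (Finset.mem_insert_of_mem hs)
  rw [Finset.sum_insert hxS] at herase
  have := pivotRank_lt_pivotRank h
  unfold morseWeight
  omega

open Classical in
/-- The Morse homotopy on `y_S`: `H y_S = y_{S ∪ x} - H (∂ y_{S ∪ x} - y_S)` when `S` is matched
with `S ∪ {x}` (`morseHomotopy_single_of_up`), written out so that the recursion visibly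
decreases `morseWeight`. -/
noncomputable def morseHomotopyAux (S : Finset (Vn n)) : Qn n :=
  match h : morseStatus S with
  | .up x => Finsupp.single (insert x S) 1 -
      ∑ s ∈ (S.filter (Redundant (insert x S))).attach, morseHomotopyAux ((insert x S).erase s)
  | .critical => 0
  | .down _ => 0
termination_by morseWeight S
decreasing_by
  obtain ⟨hs, hsr⟩ := Finset.mem_filter.1 s.2
  obtain ⟨hxS, -, hlt⟩ := morseStatus_eq_up h
  exact morseWeight_erase_insert_lt hxS hs (hlt _ hs hsr)

noncomputable def morseHomotopy (n : ℕ) : Qn n →ₗ[ZMod 2] Qn n :=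
  Finsupp.linearCombination (ZMod 2) morseHomotopyAux

theorem morseHomotopy_single (S : Finset (Vn n)) :
    morseHomotopy n (Finsupp.single S 1) = morseHomotopyAux S := by
  rw [morseHomotopy, Finsupp.linearCombination_single, one_smul]

theorem morseHomotopy_single_of_up {S : Finset (Vn n)} {x : Vn n} (h : morseStatus S = .up x) :
    morseHomotopy n (Finsupp.single S 1) = Finsupp.single (insert x S) 1 -
      morseHomotopy n (pdmap n (Finsupp.single (insert x S) 1) - Finsupp.single S 1) := by
  obtain ⟨hxS, hx, -⟩ := morseStatus_eq_up h
  rw [pdmap_single_insert hxS hx, add_sub_cancel_left, map_sum, morseHomotopy_single,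
    morseHomotopyAux]
  split <;> rename_i h' <;> rw [h] at h' <;> cases h'
  simp_rw [morseHomotopy_single]
  exact congrArg _ (Finset.sum_attach _ fun s => morseHomotopyAux ((insert x S).erase s))

theorem morseHomotopy_single_of_critical {S : Finset (Vn n)} (h : morseStatus S = .critical) :
    morseHomotopy n (Finsupp.single S 1) = 0 := by
  rw [morseHomotopy_single, morseHomotopyAux]
  split <;> simp_all

theorem morseHomotopy_single_of_down {S : Finset (Vn n)} {x : Vn n}
    (h : morseStatus S = .down x) : morseHomotopy n (Finsupp.single S 1) = 0 := by
  rw [morseHomotopy_single, morseHomotopyAux]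
  split <;> simp_all

noncomputable def morseRetraction (n : ℕ) : Qn n →ₗ[ZMod 2] Qn n :=
  LinearMap.id - pdmap n ∘ₗ morseHomotopy n - morseHomotopy n ∘ₗ pdmap n

theorem morseRetraction_apply (z : Qn n) :
    morseRetraction n z = z - pdmap n (morseHomotopy n z) - morseHomotopy n (pdmap n z) :=
  rfl

theorem morseRetraction_pdmap (z : Qn n) :
    morseRetraction n (pdmap n z) = pdmap n (morseRetraction n z) := by
  simp only [morseRetraction_apply, map_sub, pdmap_pdmap, map_zero, sub_zero]

theorem morseRetraction_single_of_echelon {S : Finset (Vn n)} (hS : Echelon n S) :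
    morseRetraction n (Finsupp.single S 1) = Finsupp.single S 1 := by
  rw [morseRetraction_apply, morseHomotopy_single_of_critical (morseStatus_eq_critical_iff.2 hS),
    pdmap_single_of_echelon hS, map_zero, map_zero, sub_zero, sub_zero]

theorem morseRetraction_single_of_down {S : Finset (Vn n)} {x : Vn n}
    (h : morseStatus S = .down x) : morseRetraction n (Finsupp.single S 1) = 0 := by
  obtain ⟨hxS, hup⟩ := morseStatus_eq_down h
  have hH := morseHomotopy_single_of_up hup
  rw [Finset.insert_erase hxS, map_sub, eq_sub_iff_add_eq, add_sub_cancel] at hH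
  rw [morseRetraction_apply, morseHomotopy_single_of_down h, map_zero, sub_zero, hH, sub_self]

open Classical in
theorem morseRetraction_single_of_up {S : Finset (Vn n)} {x : Vn n}
    (h : morseStatus S = .up x) :
    morseRetraction n (Finsupp.single S 1) =
      -∑ s ∈ S with Redundant (insert x S) s,
        morseRetraction n (Finsupp.single ((insert x S).erase s) 1) := by
  obtain ⟨hxS, hx, -⟩ := morseStatus_eq_up h
  have hw : ∑ s ∈ S with Redundant (insert x S) s, Finsupp.single ((insert x S).erase s) 1 =
      pdmap n (Finsupp.single (insert x S) 1) - Finsupp.single S 1 := by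
    rw [pdmap_single_insert hxS hx, add_sub_cancel_left]
  rw [← map_sum, hw, morseRetraction_apply, morseRetraction_apply, morseHomotopy_single_of_up h]
  simp only [map_sub, pdmap_pdmap]
  abel

noncomputable def echelonSpan (n : ℕ) : Submodule (ZMod 2) (Qn n) :=
  Submodule.span (ZMod 2)
    (Set.range fun S : {S : Finset (Vn n) // Echelon n S} => Finsupp.single S.1 1)

theorem morseRetraction_single_mem (S : Finset (Vn n)) :
    morseRetraction n (Finsupp.single S 1) ∈ echelonSpan n := by
  classical
  match h : morseStatus S with
  | .critical =>
    have hS := morseStatus_eq_critical_iff.1 h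
    rw [morseRetraction_single_of_echelon hS]
    exact Submodule.subset_span ⟨⟨S, hS⟩, rfl⟩
  | .down x => rw [morseRetraction_single_of_down h]; exact zero_mem _
  | .up x =>
    rw [morseRetraction_single_of_up h]
    refine neg_mem <| sum_mem fun s hs => ?_
    obtain ⟨hs, hsr⟩ := Finset.mem_filter.1 hs
    have : morseWeight ((insert x S).erase s) < morseWeight S := by
      obtain ⟨hxS, -, hlt⟩ := morseStatus_eq_up h
      exact morseWeight_erase_insert_lt hxS hs (hlt _ hs hsr)
    exact morseRetraction_single_mem _
termination_by morseWeight S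

theorem morseRetraction_mem (z : Qn n) : morseRetraction n z ∈ echelonSpan n := by
  induction z using Finsupp.induction_linear with
  | zero => rw [map_zero]; exact zero_mem _
  | add z w hz hw => rw [map_add]; exact add_mem hz hw
  | single S a =>
    rw [← Finsupp.smul_single_one, map_smul]
    exact Submodule.smul_mem _ a (morseRetraction_single_mem S)

theorem morseRetraction_of_mem {e : Qn n} (he : e ∈ echelonSpan n) : morseRetraction n e = e :=
  (Submodule.span_le (p := LinearMap.eqLocus (morseRetraction n) LinearMap.id)).2
    (by rintro _ ⟨S, rfl⟩; exact morseRetraction_single_of_echelon S.2) he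

theorem echelonSpan_le_ker : echelonSpan n ≤ LinearMap.ker (pdmap n) :=
  Submodule.span_le.2 <| by rintro _ ⟨S, rfl⟩; exact pdmap_single_of_echelon S.2

theorem disjoint_echelonSpan_range : Disjoint (echelonSpan n) (LinearMap.range (pdmap n)) := by
  rw [Submodule.disjoint_def]
  rintro _ he ⟨q, rfl⟩
  rw [← morseRetraction_of_mem he, morseRetraction_pdmap]
  exact echelonSpan_le_ker (morseRetraction_mem q)

theorem ker_le_echelonSpan_sup_range :
    LinearMap.ker (pdmap n) ≤ echelonSpan n ⊔ LinearMap.range (pdmap n) := fun z hz => by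
  refine Submodule.mem_sup.2 ⟨_, morseRetraction_mem z, _, ⟨morseHomotopy n z, rfl⟩, ?_⟩
  rw [morseRetraction_apply, LinearMap.mem_ker.1 hz, map_zero, sub_zero, sub_add_cancel]

/-- `∂ ∘ ∂ = 0`, and the homology of `(Q_n, ∂)` is freely generated by the classes of the
`y_S` with `S` linearly independent in row echelon form w.r.t. reversed column order. -/
theorem stmt6 (n : ℕ) :
    pdmap n ∘ₗ pdmap n = 0 ∧
    ∃ b : Module.Basis {S : Finset (Vn n) // Echelon n S} (ZMod 2) (Hmlgy n),
      ∀ S : {S : Finset (Vn n) // Echelon n S},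
        ∃ h : Finsupp.single S.1 (1 : ZMod 2) ∈ LinearMap.ker (pdmap n),
          b S = Submodule.Quotient.mk ⟨Finsupp.single S.1 (1 : ZMod 2), h⟩ := by
  obtain ⟨b, hb⟩ := exists_basis_homology (pdmap n)
    (fun S : {S // Echelon n S} => Finsupp.single S.1 1)
    ((Finsupp.linearIndependent_single_one (ZMod 2) _).comp _ Subtype.val_injective)
    (fun S => pdmap_single_of_echelon S.2) disjoint_echelonSpan_range ker_le_echelonSpan_sup_range
  exact ⟨pdmap_comp_pdmap, b, fun S => ⟨_, hb S⟩⟩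
end

section
/- Identify $(\mathbb{Z}/2)^n = (\mathbb{Z}/2)^{n-1} \times \mathbb{Z}/2$ and let $R_n = \mathbb{F}_2[x_\alpha \mid \alpha \in (\mathbb{Z}/2)^n \setminus \{0\}]/(x_\alpha x_\beta + x_\alpha x_\gamma + x_\beta x_\gamma \mid \alpha+\beta+\gamma=0)$. Then, viewing $R_{n-1}$ as the subring of $R_n$ generated by the $x_{(\alpha,0)}$ with $0 \neq \alpha \in (\mathbb{Z}/2)^{n-1}$, one has the decomposition $R_n = R_{n-1} \cdot \mathbb{F}_2[x_{(0,\dots,0,1)}] + \sum_{\alpha \in ((\mathbb{Z}/2)^{n-1}\setminus\{0\}) \times \{1\}} R_{n-1} \cdot x_\alpha \mathbb{F}_2[x_\alpha]$, i.e., $R_n$ is generated as an $R_{n-1}$-module by the powers $x_\alpha^k$ ($k \geq 0$) of generators $x_\alpha$ with $\alpha$ having last coordinate $1$, together with powers of $x_{(0,\dots,0,1)}$. -/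
open MvPolynomial

/-!
Let `α, β` have last coordinate `1` and put `γ = α + β`, so `x_γ ∈ R_{n-1}`. The relation
`x_α x_β = -x_γ (x_α + x_β)` gives `x_β^{k+1} x_α = -x_γ (x_β^k x_α) - x_γ x_β^{k+1}`, so by
induction on `k` every product `x_β^k x_α` lies in the `R_{n-1}`-span of the powers. Hence
that span is stable under multiplication by all generators; as it contains `1`, it is all of `R_n`.
-/

section SpanPowers

variable {K R : Type*} [CommRing K] [CommRing R] [Algebra K R] {A : Subalgebra K R}
  {s : Set R}

theorem pow_mul_mem_span_powers
    (hrel : ∀ a ∈ s, ∀ b ∈ s, a ≠ b → ∃ c ∈ A, a * b + a * c + b * c = 0)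
    {a b : R} (ha : a ∈ s) (hb : b ∈ s) (k : ℕ) :
    b ^ k * a ∈ Submodule.span A (⋃ x ∈ s, (Submonoid.powers x : Set R)) := by
  set S := Submodule.span A (⋃ x ∈ s, (Submonoid.powers x : Set R))
  have pow_mem : ∀ x ∈ s, ∀ m : ℕ, x ^ m ∈ S := fun x hx m =>
    Submodule.subset_span (Set.mem_biUnion hx ⟨m, rfl⟩)
  rcases eq_or_ne a b with rfl | hab
  · simpa only [← pow_succ] using pow_mem a ha (k + 1)
  obtain ⟨c, hcA, hc⟩ := hrel a ha b hb hab
  induction k with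
  | zero => simpa only [pow_zero, one_mul, pow_one] using pow_mem a ha 1
  | succ k ih =>
    have expand : b ^ (k + 1) * a = -c * (b ^ k * a) + -c * b ^ (k + 1) := by
      linear_combination b ^ k * hc
    rw [expand]
    exact S.add_mem (S.smul_mem (-⟨c, hcA⟩ : A) ih) (S.smul_mem (-⟨c, hcA⟩ : A) (pow_mem b hb _))

theorem mul_mem_span_powers
    (hrel : ∀ a ∈ s, ∀ b ∈ s, a ≠ b → ∃ c ∈ A, a * b + a * c + b * c = 0)
    {a z : R} (ha : a ∈ s) (hz : z ∈ Submodule.span A (⋃ x ∈ s, (Submonoid.powers x : Set R))) :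
    a * z ∈ Submodule.span A (⋃ x ∈ s, (Submonoid.powers x : Set R)) := by
  induction hz using Submodule.span_induction with
  | mem y hy =>
    obtain ⟨b, hb, k, rfl⟩ := Set.mem_iUnion₂.1 hy
    rw [mul_comm]
    exact pow_mul_mem_span_powers hrel ha hb k
  | zero => simp
  | add y z _ _ hy hz => rw [mul_add]; exact Submodule.add_mem _ hy hz
  | smul r y _ hy => rw [mul_smul_comm]; exact Submodule.smul_mem _ r hy

theorem span_powers_eq_top (hs : s.Nonempty) (hgen : Algebra.adjoin K ((A : Set R) ∪ s) = ⊤)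
    (hrel : ∀ a ∈ s, ∀ b ∈ s, a ≠ b → ∃ c ∈ A, a * b + a * c + b * c = 0) :
    Submodule.span A (⋃ x ∈ s, (Submonoid.powers x : Set R)) = ⊤ := by
  set S := Submodule.span A (⋃ x ∈ s, (Submonoid.powers x : Set R))
  have one_mem : (1 : R) ∈ S := by
    obtain ⟨a, ha⟩ := hs
    exact Submodule.subset_span (Set.mem_biUnion ha (Submonoid.one_mem _))
  have mul_mem : ∀ y : R, ∀ z ∈ S, y * z ∈ S := by
    intro y
    have hy : y ∈ Algebra.adjoin K ((A : Set R) ∪ s) := hgen ▸ Algebra.mem_top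
    induction hy using Algebra.adjoin_induction with
    | mem y hy =>
      rcases hy with hyA | hys
      · exact fun z hz => S.smul_mem (⟨y, hyA⟩ : A) hz
      · exact fun z hz => mul_mem_span_powers hrel hys hz
    | algebraMap r => exact fun z hz => S.smul_mem (algebraMap K A r) hz
    | add y y' _ _ hy hy' => exact fun z hz => by rw [add_mul]; exact S.add_mem (hy z hz) (hy' z hz)
    | mul y y' _ _ hy hy' => exact fun z hz => by rw [mul_assoc]; exact hy _ (hy' z hz)
  exact eq_top_iff.2 fun y _ => by simpa only [mul_one] using mul_mem y 1 one_mem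

end SpanPowers

section RelIdeal

variable {n : ℕ}

theorem mk_X_mul_add_mul_add_mul_eq_zero {a b c : Vn n} (h : (a : Fin n → ZMod 2) + b + c = 0) :
    Ideal.Quotient.mk (relIdeal n) (X a) * Ideal.Quotient.mk (relIdeal n) (X b) +
      Ideal.Quotient.mk (relIdeal n) (X a) * Ideal.Quotient.mk (relIdeal n) (X c) +
      Ideal.Quotient.mk (relIdeal n) (X b) * Ideal.Quotient.mk (relIdeal n) (X c) = 0 := by
  simp only [← map_mul, ← map_add]
  exact Ideal.Quotient.eq_zero_iff_mem.2 (Ideal.subset_span ⟨a, b, c, h, rfl⟩)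

theorem adjoin_range_mk_X :
    Algebra.adjoin (ZMod 2) (Set.range fun a : Vn n => Ideal.Quotient.mk (relIdeal n) (X a)) = ⊤ := by
  have hrange : (Set.range fun a : Vn n => Ideal.Quotient.mk (relIdeal n) (X a)) =
      Ideal.Quotient.mkₐ (ZMod 2) (relIdeal n) '' Set.range X := by
    rw [← Set.range_comp]; rfl
  rw [hrange, Algebra.adjoin_image, adjoin_range_X, Algebra.map_top,
    (AlgHom.range_eq_top _).2 (Ideal.Quotient.mkₐ_surjective _ _)]

theorem span_powers_mk_X_eq_top (i : Fin n) :
    Submodule.span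
      ↥(Algebra.adjoin (ZMod 2)
        {y : MvPolynomial (Vn n) (ZMod 2) ⧸ relIdeal n |
          ∃ a : Vn n, (a : Fin n → ZMod 2) i = 0 ∧ y = Ideal.Quotient.mk (relIdeal n) (X a)})
      {y : MvPolynomial (Vn n) (ZMod 2) ⧸ relIdeal n |
        ∃ (a : Vn n) (k : ℕ), (a : Fin n → ZMod 2) i = 1 ∧
          y = (Ideal.Quotient.mk (relIdeal n) (X a)) ^ k}
    = ⊤ := by
  set x := fun a : Vn n => Ideal.Quotient.mk (relIdeal n) (X a)
  set s := {y | ∃ a : Vn n, (a : Fin n → ZMod 2) i = 1 ∧ y = x a}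
  have hpowers : {y | ∃ (a : Vn n) (k : ℕ), (a : Fin n → ZMod 2) i = 1 ∧ y = x a ^ k} =
      ⋃ y ∈ s, (Submonoid.powers y : Set _) := by
    ext y
    constructor
    · rintro ⟨a, k, ha, rfl⟩
      exact Set.mem_biUnion ⟨a, ha, rfl⟩ ⟨k, rfl⟩
    · intro hy
      obtain ⟨_, ⟨a, ha, rfl⟩, k, rfl⟩ := Set.mem_iUnion₂.1 hy
      exact ⟨a, k, ha, rfl⟩
  rw [hpowers]
  refine span_powers_eq_top ?_ ?_ ?_
  · have he : (Pi.single i 1 : Fin n → ZMod 2) ≠ 0 := by simp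
    exact ⟨x ⟨_, he⟩, ⟨_, he⟩, by simp, rfl⟩
  · refine eq_top_iff.2 (adjoin_range_mk_X (n := n) ▸ Algebra.adjoin_mono ?_)
    rintro _ ⟨a, rfl⟩
    rcases (by decide : ∀ t : ZMod 2, t = 0 ∨ t = 1) ((a : Fin n → ZMod 2) i) with ha | ha
    · exact Or.inl (Algebra.subset_adjoin ⟨a, ha, rfl⟩)
    · exact Or.inr ⟨a, ha, rfl⟩
  · rintro _ ⟨a, ha, rfl⟩ _ ⟨b, hb, rfl⟩ hab
    have hc : (a : Fin n → ZMod 2) + b ≠ 0 := fun h =>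
      hab (congrArg x (Subtype.ext (funext fun j => CharTwo.add_eq_zero.1 (congrFun h j))))
    refine ⟨x ⟨_, hc⟩, Algebra.subset_adjoin ⟨_, ?_, rfl⟩, mk_X_mul_add_mul_add_mul_eq_zero ?_⟩
    · simp only [Pi.add_apply, ha, hb]
      exact CharTwo.add_self_eq_zero 1
    · funext j
      exact CharTwo.add_self_eq_zero (a.1 j + b.1 j)

end RelIdeal

set_option synthInstance.maxHeartbeats 1000000 in
/-- Identifying `(ℤ/2)^n = (ℤ/2)^{n-1} × ℤ/2` (last coordinate), `R_n` is generated as a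
module over the copy of `R_{n-1}` (the subalgebra generated by the `x_α` with last
coordinate of `α` zero) by the powers `x_α^k` (`k ≥ 0`) of the generators `x_α` with `α`
having last coordinate `1` (these include `x_{(0,…,0,1)}`). -/
theorem stmt9 (n : ℕ) (hn : 1 ≤ n) :
    Submodule.span
      ↥(Algebra.adjoin (ZMod 2)
        {y : MvPolynomial (Vn n) (ZMod 2) ⧸ relIdeal n |
          ∃ a : Vn n, (a : Fin n → ZMod 2) ⟨n-1, by omega⟩ = 0 ∧
            y = Ideal.Quotient.mk (relIdeal n) (X a)})
      {y : MvPolynomial (Vn n) (ZMod 2) ⧸ relIdeal n |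
        ∃ (a : Vn n) (k : ℕ), (a : Fin n → ZMod 2) ⟨n-1, by omega⟩ = 1 ∧
          y = (Ideal.Quotient.mk (relIdeal n) (X a))^k}
    = ⊤ := span_powers_mk_X_eq_top ⟨n - 1, by omega⟩
end
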